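/- (Lipschitz continuity) Fix a temperature τ > 0, a path-length parameter K ≥ 1, and n ≥ 2. There exists a constant L = L(τ, K, n) > 0 such that for every agent a and every pair of matrices P, P' ∈ [0,1]^{n×n}, the soft Top-Cycle scores satisfy |t_τ(a; P) − t_τ(a; P')| ≤ L · ‖P − P'‖_∞, where ‖·‖_∞ denotes the entrywise supremum norm. -/

import Mathlib

open Filter Topology

/-- The logistic sigmoid. -/
noncomputable def sigmoid (z : ℝ) : ℝ := 1 / (1 + Real.exp (-z))

/-- Soft majority edge matrix `D_τ`. -/
noncomputable def softEdge {n : ℕ} (P : Matrix (Fin n) (Fin n) ℝ) (τ : ℝ) :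
    Matrix (Fin n) (Fin n) ℝ := fun a b => sigmoid ((P a b - 1/2) / τ)

/-- 0/1 adjacency matrix of the hard majority tournament. -/
noncomputable def hardAdj {n : ℕ} (P : Matrix (Fin n) (Fin n) ℝ) : Matrix (Fin n) (Fin n) ℝ :=
  fun a b => if 1/2 < P a b then 1 else 0

/-- Soft reachability matrix `R_τ = Σ_{k=1}^K D_τ^k`. -/
noncomputable def softReach {n : ℕ} (P : Matrix (Fin n) (Fin n) ℝ) (τ : ℝ) (K : ℕ) :
    Matrix (Fin n) (Fin n) ℝ := ∑ k ∈ Finset.Icc 1 K, softEdge P τ ^ k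

/-- softmin over a finite family. -/
noncomputable def softmin {ι : Type*} (τ : ℝ) (s : Finset ι) (f : ι → ℝ) : ℝ :=
  -τ * Real.log (∑ i ∈ s, Real.exp (-(f i) / τ))

/-- scalar soft maximum over a finite family. -/
noncomputable def smax {ι : Type*} (τ : ℝ) (s : Finset ι) (f : ι → ℝ) : ℝ :=
  τ * Real.log (∑ i ∈ s, Real.exp (f i / τ))

/-- Soft Top-Cycle membership score `t_τ(a)`. -/
noncomputable def tcScore {n : ℕ} (P : Matrix (Fin n) (Fin n) ℝ) (τ : ℝ) (K : ℕ) (a : Fin n) : ℝ :=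
  softmin τ ({a}ᶜ : Finset (Fin n)) (fun b => softReach P τ K a b)

/-- Soft cover score `cover_τ(c, a)`. -/
noncomputable def coverScore {n : ℕ} (P : Matrix (Fin n) (Fin n) ℝ) (τ : ℝ) (c a : Fin n) : ℝ :=
  softEdge P τ c a *
    (1 - smax τ (Finset.univ : Finset (Fin n)) (fun b => softEdge P τ a b - softEdge P τ c b))

/-- Soft Uncovered-Set membership score `u_τ(a)`. -/
noncomputable def ucScore {n : ℕ} (P : Matrix (Fin n) (Fin n) ℝ) (τ : ℝ) (a : Fin n) : ℝ :=
  1 - smax τ ({a}ᶜ : Finset (Fin n)) (fun c => coverScore P τ c a)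

/-- `a ≻ b` in the hard majority tournament. -/
def beats {n : ℕ} (P : Matrix (Fin n) (Fin n) ℝ) (a b : Fin n) : Prop := 1/2 < P a b

/-- `a` reaches `b` via a directed path in the hard majority tournament. -/
def reaches {n : ℕ} (P : Matrix (Fin n) (Fin n) ℝ) : Fin n → Fin n → Prop :=
  Relation.TransGen (beats P)

/-- `c` covers `a` in the hard majority tournament. -/
def covers {n : ℕ} (P : Matrix (Fin n) (Fin n) ℝ) (c a : Fin n) : Prop :=
  beats P c a ∧ ∀ b, beats P a b → beats P c b

/-- membership in the Top Cycle of the hard majority tournament. -/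
def inTopCycle {n : ℕ} (P : Matrix (Fin n) (Fin n) ℝ) (a : Fin n) : Prop :=
  ∀ b, b ≠ a → reaches P a b

/-- membership in the Uncovered Set of the hard majority tournament. -/
def inUncovered {n : ℕ} (P : Matrix (Fin n) (Fin n) ℝ) (a : Fin n) : Prop :=
  ∀ c, c ≠ a → ¬ covers P c a

/-- `P` is a probabilistic tournament. -/
def IsProbTournament {n : ℕ} (P : Matrix (Fin n) (Fin n) ℝ) : Prop :=
  (∀ a b, 0 ≤ P a b ∧ P a b ≤ 1) ∧ (∀ a b, P a b + P b a = 1) ∧ ∀ a, P a a = 1/2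

/-- margin assumption with margin `δ`. -/
def HasMargin {n : ℕ} (P : Matrix (Fin n) (Fin n) ℝ) (δ : ℝ) : Prop :=
  ∀ a b, a ≠ b → δ ≤ |P a b - 1/2|

/-! Each ingredient of `t_τ` is Lipschitz: the sigmoid with constant `1/4`, so `D_τ` moves by at
most `‖P - P'‖_∞ / (4τ)` entrywise; powers of matrices of `L∞`-operator norm at most `n` are
Lipschitz in that norm, which controls `R_τ`; and `softmin_τ` is `1`-Lipschitz for the sup norm,
being monotone and commuting with adding constants. -/

theorem sigmoid_eq_real_sigmoid : sigmoid = Real.sigmoid := by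
  funext z
  rw [sigmoid, Real.sigmoid_def, one_div]

theorem Real.lipschitzWith_sigmoid : LipschitzWith 4⁻¹ Real.sigmoid := by
  refine lipschitzWith_of_nnnorm_deriv_le differentiable_sigmoid fun x => ?_
  rw [← NNReal.coe_le_coe, coe_nnnorm, Real.deriv_sigmoid, Real.norm_eq_abs,
    abs_of_nonneg (mul_nonneg (Real.sigmoid_nonneg x) (by linarith [Real.sigmoid_le_one x]))]
  push_cast
  nlinarith [sq_nonneg (Real.sigmoid x - 1 / 2)]

theorem abs_softEdge_sub_softEdge_le {n : ℕ} (P P' : Matrix (Fin n) (Fin n) ℝ) {τ : ℝ}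
    (hτ : 0 < τ) (i j : Fin n) :
    |softEdge P τ i j - softEdge P' τ i j| ≤ |P i j - P' i j| / (4 * τ) := by
  have h := Real.lipschitzWith_sigmoid.dist_le_mul ((P i j - 1 / 2) / τ) ((P' i j - 1 / 2) / τ)
  rw [Real.dist_eq, Real.dist_eq, ← sub_div, sub_sub_sub_cancel_right, abs_div,
    abs_of_pos hτ] at h
  rw [softEdge, softEdge, sigmoid_eq_real_sigmoid]
  calc _ ≤ 4⁻¹ * (|P i j - P' i j| / τ) := by exact_mod_cast h
    _ = |P i j - P' i j| / (4 * τ) := by field_simp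

theorem norm_pow_sub_pow_le {R : Type*} [SeminormedRing R] (a b : R) (k : ℕ) :
    ‖a ^ k - b ^ k‖ ≤ ‖a - b‖ * k * max ‖a‖ ‖b‖ ^ (k - 1) := by
  set M := max ‖a‖ ‖b‖
  suffices ∀ k : ℕ, ‖a ^ (k + 1) - b ^ (k + 1)‖ ≤ ‖a - b‖ * (k + 1) * M ^ k by
    cases k with
    | zero => simp
    | succ k => simpa using this k
  intro k
  induction k with
  | zero => simp
  | succ k ih =>
    have hb : ‖b ^ (k + 1)‖ ≤ M ^ (k + 1) :=
      (norm_pow_le' b k.succ_pos).trans (pow_le_pow_left₀ (norm_nonneg b) (le_max_right _ _) _)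
    calc ‖a ^ (k + 1 + 1) - b ^ (k + 1 + 1)‖
        = ‖a * (a ^ (k + 1) - b ^ (k + 1)) + (a - b) * b ^ (k + 1)‖ := by
          rw [mul_sub, sub_mul, ← pow_succ', ← pow_succ']; abel_nf
      _ ≤ ‖a‖ * ‖a ^ (k + 1) - b ^ (k + 1)‖ + ‖a - b‖ * ‖b ^ (k + 1)‖ :=
          (norm_add_le _ _).trans (add_le_add (norm_mul_le _ _) (norm_mul_le _ _))
      _ ≤ M * (‖a - b‖ * (k + 1) * M ^ k) + ‖a - b‖ * M ^ (k + 1) := by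
          gcongr
          exact le_max_left _ _
      _ = ‖a - b‖ * ((k + 1 : ℕ) + 1) * M ^ (k + 1) := by push_cast; ring

theorem norm_sum_pow_sub_sum_pow_le {R : Type*} [SeminormedRing R] {a b : R} {M : ℝ}
    (hM : 1 ≤ M) (ha : ‖a‖ ≤ M) (hb : ‖b‖ ≤ M) (K : ℕ) :
    ‖∑ k ∈ Finset.Icc 1 K, a ^ k - ∑ k ∈ Finset.Icc 1 K, b ^ k‖ ≤
      ‖a - b‖ * K ^ 2 * M ^ (K - 1) := by
  rw [← Finset.sum_sub_distrib]
  refine (norm_sum_le _ _).trans ?_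
  calc ∑ k ∈ Finset.Icc 1 K, ‖a ^ k - b ^ k‖
      ≤ ∑ _k ∈ Finset.Icc 1 K, ‖a - b‖ * K * M ^ (K - 1) := by
        refine Finset.sum_le_sum fun k hk => (norm_pow_sub_pow_le a b k).trans ?_
        have hkK := (Finset.mem_Icc.1 hk).2
        have hpow : max ‖a‖ ‖b‖ ^ (k - 1) ≤ M ^ (K - 1) :=
          (pow_le_pow_left₀ (by positivity) (max_le ha hb) _).trans
            (pow_le_pow_right₀ hM (by omega))
        gcongr
    _ = ‖a - b‖ * K ^ 2 * M ^ (K - 1) := by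
        rw [Finset.sum_const, Nat.card_Icc, nsmul_eq_mul]; push_cast; ring

section LinftyOpNorm

attribute [local instance] Matrix.linftyOpSeminormedAddCommGroup Matrix.linftyOpSemiNormedRing

section

variable {m n α : Type*} [Fintype m] [Fintype n] [SeminormedAddCommGroup α]

theorem Matrix.norm_apply_le_linfty_opNorm (A : Matrix m n α) (i : m) (j : n) :
    ‖A i j‖ ≤ ‖A‖ := by
  rw [Matrix.linfty_opNorm_def, ← coe_nnnorm, NNReal.coe_le_coe]
  exact (Finset.single_le_sum (fun _ _ => by positivity) (Finset.mem_univ j)).trans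
    (Finset.le_sup (f := fun i => ∑ j, ‖A i j‖₊) (Finset.mem_univ i))

theorem Matrix.linfty_opNorm_le_of_norm_apply_le {A : Matrix m n α} {c : ℝ} (hc : 0 ≤ c)
    (h : ∀ i j, ‖A i j‖ ≤ c) : ‖A‖ ≤ Fintype.card n * c := by
  have hentry (i : m) (j : n) : ‖A i j‖₊ ≤ c.toNNReal := by
    rw [← NNReal.coe_le_coe, coe_nnnorm, Real.coe_toNNReal c hc]
    exact h i j
  have hsup : (Finset.univ.sup fun i => ∑ j, ‖A i j‖₊) ≤ Fintype.card n * c.toNNReal :=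
    Finset.sup_le fun i _ => (Finset.sum_le_sum fun j _ => hentry i j).trans (by simp)
  rw [Matrix.linfty_opNorm_def]
  simpa [Real.coe_toNNReal c hc] using NNReal.coe_le_coe.2 hsup

end

theorem norm_softEdge_le {n : ℕ} (P : Matrix (Fin n) (Fin n) ℝ) (τ : ℝ) : ‖softEdge P τ‖ ≤ n := by
  have hentry (i j : Fin n) : ‖softEdge P τ i j‖ ≤ 1 := by
    simp only [softEdge, sigmoid_eq_real_sigmoid, Real.norm_eq_abs,
      abs_of_nonneg (Real.sigmoid_nonneg _), Real.sigmoid_le_one]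
  simpa using Matrix.linfty_opNorm_le_of_norm_apply_le zero_le_one hentry

theorem abs_softReach_sub_softReach_le {n : ℕ} (hn : 1 ≤ n) {P P' : Matrix (Fin n) (Fin n) ℝ}
    {τ Δ : ℝ} (hτ : 0 < τ) (hΔ : 0 ≤ Δ) (hPP' : ∀ i j, |P i j - P' i j| ≤ Δ) {K : ℕ} (hK : 1 ≤ K)
    (a b : Fin n) :
    |softReach P τ K a b - softReach P' τ K a b| ≤ K ^ 2 * n ^ K / (4 * τ) * Δ := by
  have hD : ‖softEdge P τ - softEdge P' τ‖ ≤ n * (Δ / (4 * τ)) := by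
    simpa using Matrix.linfty_opNorm_le_of_norm_apply_le (by positivity) fun i j =>
      (abs_softEdge_sub_softEdge_le P P' hτ i j).trans (by gcongr; exact hPP' i j)
  have hR := norm_sum_pow_sub_sum_pow_le (by exact_mod_cast hn) (norm_softEdge_le P τ)
    (norm_softEdge_le P' τ) K
  calc |softReach P τ K a b - softReach P' τ K a b|
      ≤ ‖softReach P τ K - softReach P' τ K‖ :=
        Matrix.norm_apply_le_linfty_opNorm (softReach P τ K - softReach P' τ K) a b
    _ ≤ n * (Δ / (4 * τ)) * K ^ 2 * n ^ (K - 1) := hR.trans (by gcongr)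
    _ = K ^ 2 * n ^ K / (4 * τ) * Δ := by
        rw [← pow_sub_one_mul (by omega : K ≠ 0) (n : ℝ)]
        field_simp

end LinftyOpNorm

section Softmin

variable {ι : Type*} {τ : ℝ} {s : Finset ι} {f g : ι → ℝ}

theorem softmin_mono (hτ : 0 < τ) (hs : s.Nonempty) (h : ∀ i ∈ s, f i ≤ g i) :
    softmin τ s f ≤ softmin τ s g := by
  rw [softmin, softmin, neg_mul, neg_mul, neg_le_neg_iff]
  gcongr with i hi
  exact h i hi

theorem softmin_add_const (hτ : τ ≠ 0) (hs : s.Nonempty) (c : ℝ) :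
    softmin τ s (fun i => f i + c) = softmin τ s f + c := by
  have hsum : ∑ i ∈ s, Real.exp (-(f i + c) / τ) =
      (∑ i ∈ s, Real.exp (-f i / τ)) * Real.exp (-c / τ) := by
    rw [Finset.sum_mul]
    refine Finset.sum_congr rfl fun i _ => ?_
    rw [← Real.exp_add]; ring_nf
  rw [softmin, softmin, hsum, Real.log_mul (Finset.sum_pos (fun i _ => Real.exp_pos _) hs).ne'
    (Real.exp_pos _).ne', Real.log_exp]
  field_simp
  ring

theorem abs_softmin_sub_softmin_le (hτ : 0 < τ) (hs : s.Nonempty) {M : ℝ}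
    (h : ∀ i ∈ s, |f i - g i| ≤ M) : |softmin τ s f - softmin τ s g| ≤ M := by
  have hle {f g : ι → ℝ} (h : ∀ i ∈ s, |f i - g i| ≤ M) : softmin τ s f ≤ softmin τ s g + M := by
    rw [← softmin_add_const hτ.ne' hs]
    exact softmin_mono hτ hs fun i hi => by linarith [(abs_le.1 (h i hi)).2]
  rw [abs_sub_le_iff]
  constructor
  · linarith [hle h]
  · linarith [hle fun i hi => (abs_sub_comm (g i) (f i)).trans_le (h i hi)]

end Softmin

/-- Lipschitz continuity of the soft Top-Cycle score with respect to the
entrywise supremum norm on `[0,1]^{n×n}`. -/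
theorem tcScore_lipschitz {n : ℕ} (hn : 2 ≤ n) (τ : ℝ) (hτ : 0 < τ) (K : ℕ) (hK : 1 ≤ K) :
    ∃ L : ℝ, 0 < L ∧
      ∀ (a : Fin n) (P P' : Matrix (Fin n) (Fin n) ℝ),
        (∀ i j, P i j ∈ Set.Icc (0:ℝ) 1) → (∀ i j, P' i j ∈ Set.Icc (0:ℝ) 1) →
        |tcScore P τ K a - tcScore P' τ K a| ≤
          L * Finset.univ.sup'
            ⟨(⟨0, by omega⟩, ⟨0, by omega⟩), Finset.mem_univ _⟩
            (fun p : Fin n × Fin n => |P p.1 p.2 - P' p.1 p.2|) := by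
  have hK0 : (0 : ℝ) < K := by exact_mod_cast hK
  refine ⟨K ^ 2 * n ^ K / (4 * τ), by positivity, fun a P P' _ _ => ?_⟩
  set Δ := Finset.univ.sup' ⟨(⟨0, by omega⟩, ⟨0, by omega⟩), Finset.mem_univ _⟩
    (fun p : Fin n × Fin n => |P p.1 p.2 - P' p.1 p.2|)
  have hPP' (i j : Fin n) : |P i j - P' i j| ≤ Δ :=
    Finset.le_sup' (fun p : Fin n × Fin n => |P p.1 p.2 - P' p.1 p.2|) (Finset.mem_univ (i, j))
  have hΔ : 0 ≤ Δ := (abs_nonneg _).trans (hPP' ⟨0, by omega⟩ ⟨0, by omega⟩)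
  have hrest : ({a}ᶜ : Finset (Fin n)).Nonempty := by
    obtain ⟨b, hb⟩ := Fintype.exists_ne_of_one_lt_card (by simp; omega) a
    exact ⟨b, by simpa using hb⟩
  exact abs_softmin_sub_softmin_le hτ hrest fun b _ =>
    abs_softReach_sub_softReach_le (by omega) hτ hΔ hPP' hK a b
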